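/- arXiv:1812.03964 — 4 statements merged into one kernel-verified Lean document; each statement's English description precedes it below -/
import Mathlib

section
/- Let I ⊆ ℂ[x_0, …, x_N] be a homogeneous ideal that is Artinian Gorenstein of socle σ, and let P be a homogeneous polynomial of degree μ with P ∉ I. Then the colon ideal (I : P) := {Q ∈ ℂ[x_0,…,x_N] : PQ ∈ I} is a homogeneous ideal that is Artinian Gorenstein of socle σ − μ. -/
open MvPolynomial

attribute [local instance] MvPolynomial.gradedAlgebra

/-- The degree-`e` graded piece of the quotient `ℂ[x_0,…,x_{N-1}]/I`: the image in the
quotient of the space of homogeneous polynomials of degree `e`. -/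
noncomputable def gradedPiece {N : ℕ} (I : Ideal (MvPolynomial (Fin N) ℂ)) (e : ℕ) :
    Submodule ℂ (MvPolynomial (Fin N) ℂ ⧸ I) :=
  (MvPolynomial.homogeneousSubmodule (Fin N) ℂ e).map (Ideal.Quotient.mkₐ ℂ I).toLinearMap

/-- `I` is Artinian Gorenstein of socle `σ`. -/
def IsArtinianGorenstein {N : ℕ} (I : Ideal (MvPolynomial (Fin N) ℂ)) (σ : ℕ) : Prop :=
  Module.finrank ℂ (gradedPiece I σ) = 1 ∧
  (∀ i ≤ σ,
    (∀ a ∈ gradedPiece I i, a ≠ 0 → ∃ b ∈ gradedPiece I (σ - i), a * b ≠ 0) ∧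
    (∀ b ∈ gradedPiece I (σ - i), b ≠ 0 → ∃ a ∈ gradedPiece I i, a * b ≠ 0)) ∧
  (∀ e, σ < e → gradedPiece I e = ⊥)

/-- The colon ideal `(I : P) = {Q : P·Q ∈ I}`. -/
def colonIdeal {A : Type*} [CommRing A] (I : Ideal A) (P : A) : Ideal A where
  carrier := {Q | P * Q ∈ I}
  zero_mem' := by simp
  add_mem' := by
    intro a b ha hb
    simpa [mul_add] using I.add_mem ha hb
  smul_mem' := by
    intro c x hx
    simp only [Set.mem_setOf_eq, smul_eq_mul] at *
    rw [mul_comm c x, ← mul_assoc]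
    exact I.mul_mem_right c hx

lemma mem_gradedPiece {N : ℕ} {I : Ideal (MvPolynomial (Fin N) ℂ)} {e : ℕ}
    {a : MvPolynomial (Fin N) ℂ ⧸ I} :
    a ∈ gradedPiece I e ↔
      ∃ q : MvPolynomial (Fin N) ℂ, q.IsHomogeneous e ∧ Ideal.Quotient.mk I q = a := by
  simp [gradedPiece, Submodule.mem_map, mem_homogeneousSubmodule, Ideal.Quotient.mkₐ_eq_mk]

lemma decompose_coe {N : ℕ} (r : MvPolynomial (Fin N) ℂ) (i : ℕ) :
    (DirectSum.decompose (homogeneousSubmodule (Fin N) ℂ) r i : MvPolynomial (Fin N) ℂ)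
      = homogeneousComponent i r :=
  MvPolynomial.decomposition.decompose'_apply r i

lemma comp_mul {N : ℕ} {P : MvPolynomial (Fin N) ℂ} {μ : ℕ} (hP : P.IsHomogeneous μ)
    (Q : MvPolynomial (Fin N) ℂ) (d : ℕ) :
    homogeneousComponent (μ + d) (P * Q) = P * homogeneousComponent d Q := by
  conv_lhs => rw [← sum_homogeneousComponent Q, Finset.mul_sum, map_sum]
  have h : ∀ e ∈ Finset.range (Q.totalDegree + 1),
      homogeneousComponent (μ + d) (P * homogeneousComponent e Q)
        = if d = e then P * homogeneousComponent e Q else 0 := by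
    intro e _
    rw [homogeneousComponent_of_mem
      ((mem_homogeneousSubmodule _ _).mpr (hP.mul (homogeneousComponent_isHomogeneous e Q)))]
    simp [add_right_inj]
  rw [Finset.sum_congr rfl h, Finset.sum_ite_eq]
  split
  · rfl
  · next hd =>
    rw [homogeneousComponent_eq_zero _ _ (by simp [Finset.mem_range] at hd; omega), mul_zero]

lemma mk_smul {N : ℕ} (K : Ideal (MvPolynomial (Fin N) ℂ)) (c : ℂ) (x : MvPolynomial (Fin N) ℂ) :
    Ideal.Quotient.mk K (c • x) = c • Ideal.Quotient.mk K x := by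
  rw [← Ideal.Quotient.mkₐ_eq_mk ℂ K]
  exact map_smul (Ideal.Quotient.mkₐ ℂ K) c x

set_option maxHeartbeats 1000000 in
set_option synthInstance.maxHeartbeats 400000 in
theorem colon_of_artinianGorenstein (N : ℕ)
    (I : Ideal (MvPolynomial (Fin (N + 1)) ℂ))
    (hIhom : Ideal.IsHomogeneous (homogeneousSubmodule (Fin (N + 1)) ℂ) I)
    (σ : ℕ) (hI : IsArtinianGorenstein I σ)
    (P : MvPolynomial (Fin (N + 1)) ℂ) (μ : ℕ) (hP : P.IsHomogeneous μ) (hPI : P ∉ I) :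
    Ideal.IsHomogeneous (homogeneousSubmodule (Fin (N + 1)) ℂ) (colonIdeal I P) ∧
      IsArtinianGorenstein (colonIdeal I P) (σ - μ) := by
  classical
  obtain ⟨hdim, hpair, hvan⟩ := hI
  have mk0I : ∀ q : MvPolynomial (Fin (N + 1)) ℂ, Ideal.Quotient.mk I q = 0 ↔ q ∈ I :=
    fun q => Ideal.Quotient.eq_zero_iff_mem
  have mk0J : ∀ q : MvPolynomial (Fin (N + 1)) ℂ,
      Ideal.Quotient.mk (colonIdeal I P) q = 0 ↔ P * q ∈ I :=
    fun q => Ideal.Quotient.eq_zero_iff_mem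
  have hμσ : μ ≤ σ := by
    by_contra h
    have hmem : Ideal.Quotient.mk I P ∈ gradedPiece I μ := mem_gradedPiece.mpr ⟨P, hP, rfl⟩
    rw [hvan μ (by omega)] at hmem
    exact hPI ((mk0I P).mp (Submodule.mem_bot ℂ |>.mp hmem))
  -- homogeneity
  have hhom : Ideal.IsHomogeneous (homogeneousSubmodule (Fin (N + 1)) ℂ) (colonIdeal I P) := by
    intro i r hr
    have h1 : homogeneousComponent (μ + i) (P * r) ∈ I := by
      have := hIhom (μ + i) hr
      rwa [decompose_coe] at this
    rw [comp_mul hP] at h1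
    show _ ∈ colonIdeal I P
    rw [decompose_coe]
    exact h1
  -- dual element for P
  have hP0 : Ideal.Quotient.mk I P ≠ 0 := fun h => hPI ((mk0I P).mp h)
  obtain ⟨b, hb, hPb⟩ := (hpair μ hμσ).1 (Ideal.Quotient.mk I P)
    (mem_gradedPiece.mpr ⟨P, hP, rfl⟩) hP0
  obtain ⟨r₀, hr₀hom, rfl⟩ := mem_gradedPiece.mp hb
  have hPr₀ : P * r₀ ∉ I := by
    intro h
    exact hPb (by rw [← map_mul]; exact (mk0I _).mpr h)
  have hPr₀mem : Ideal.Quotient.mk I (P * r₀) ∈ gradedPiece I σ := by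
    have := hP.mul hr₀hom
    rw [Nat.add_sub_cancel' hμσ] at this
    exact mem_gradedPiece.mpr ⟨_, this, rfl⟩
  have hPr₀0 : Ideal.Quotient.mk I (P * r₀) ≠ 0 := fun h => hPr₀ ((mk0I _).mp h)
  have key : ∀ x ∈ gradedPiece I σ, ∃ c : ℂ, c • Ideal.Quotient.mk I (P * r₀) = x := by
    intro x hx
    obtain ⟨c, hc⟩ := exists_smul_eq_of_finrank_eq_one hdim
      (x := (⟨_, hPr₀mem⟩ : gradedPiece I σ)) (by simpa using hPr₀0) ⟨x, hx⟩
    exact ⟨c, by simpa using Subtype.ext_iff.mp hc⟩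
  refine ⟨hhom, ?_, ?_, ?_⟩
  · -- dimension 1
    rw [finrank_eq_one_iff']
    refine ⟨⟨Ideal.Quotient.mk _ r₀, mem_gradedPiece.mpr ⟨r₀, hr₀hom, rfl⟩⟩, ?_, ?_⟩
    · simp only [ne_eq, Submodule.mk_eq_zero]
      exact fun h => hPr₀ ((mk0J r₀).mp h)
    · rintro ⟨w, hw⟩
      obtain ⟨q, hqhom, rfl⟩ := mem_gradedPiece.mp hw
      have hq : Ideal.Quotient.mk I (P * q) ∈ gradedPiece I σ := by
        have := hP.mul hqhom
        rw [Nat.add_sub_cancel' hμσ] at this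
        exact mem_gradedPiece.mpr ⟨_, this, rfl⟩
      obtain ⟨c, hc⟩ := key _ hq
      refine ⟨c, ?_⟩
      have hsub : q - c • r₀ ∈ colonIdeal I P := by
        show P * (q - c • r₀) ∈ I
        have h2 : Ideal.Quotient.mk I (P * q - c • (P * r₀)) = 0 := by
          rw [map_sub, mk_smul, hc, sub_self]
        have h3 : P * q - c • (P * r₀) ∈ I := (mk0I _).mp h2
        rw [mul_sub, mul_smul_comm]
        exact h3
      apply Subtype.ext
      show c • Ideal.Quotient.mk (colonIdeal I P) r₀ = Ideal.Quotient.mk (colonIdeal I P) q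
      have h4 : Ideal.Quotient.mk (colonIdeal I P) (q - c • r₀) = 0 :=
        Ideal.Quotient.eq_zero_iff_mem.mpr hsub
      rw [map_sub, mk_smul, sub_eq_zero] at h4
      exact h4.symm
  · -- perfect pairing
    intro i hi
    constructor
    · intro a ha ha0
      obtain ⟨q, hqhom, rfl⟩ := mem_gradedPiece.mp ha
      have hPq : P * q ∉ I := fun h => ha0 ((mk0J q).mpr h)
      have hmem : Ideal.Quotient.mk I (P * q) ∈ gradedPiece I (μ + i) :=
        mem_gradedPiece.mpr ⟨_, hP.mul hqhom, rfl⟩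
      obtain ⟨b, hb, hab⟩ := (hpair (μ + i) (by omega)).1 _ hmem
        (fun h => hPq ((mk0I _).mp h))
      obtain ⟨r, hrhom, rfl⟩ := mem_gradedPiece.mp hb
      have hrhom' : r.IsHomogeneous (σ - μ - i) := by
        rwa [show σ - μ - i = σ - (μ + i) by omega]
      refine ⟨Ideal.Quotient.mk _ r, mem_gradedPiece.mpr ⟨r, hrhom', rfl⟩, fun h => hab ?_⟩
      rw [← map_mul] at h ⊢
      exact (mk0I _).mpr (by rw [mul_assoc]; exact (mk0J _).mp h)
    · intro b hb hb0
      obtain ⟨r, hrhom, rfl⟩ := mem_gradedPiece.mp hb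
      have hPr : P * r ∉ I := fun h => hb0 ((mk0J r).mpr h)
      have hmem : Ideal.Quotient.mk I (P * r) ∈ gradedPiece I (σ - i) := by
        have := hP.mul hrhom
        rw [show μ + (σ - μ - i) = σ - i by omega] at this
        exact mem_gradedPiece.mpr ⟨_, this, rfl⟩
      obtain ⟨a, ha, hab⟩ := (hpair i (by omega)).2 _ hmem (fun h => hPr ((mk0I _).mp h))
      obtain ⟨s, hshom, rfl⟩ := mem_gradedPiece.mp ha
      refine ⟨Ideal.Quotient.mk _ s, mem_gradedPiece.mpr ⟨s, hshom, rfl⟩, fun h => hab ?_⟩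
      rw [← map_mul] at h ⊢
      exact (mk0I _).mpr
        (by rw [show s * (P * r) = P * (s * r) by ring]; exact (mk0J _).mp h)
  · -- vanishing
    intro e he
    apply (Submodule.eq_bot_iff _).mpr
    intro a ha
    obtain ⟨q, hqhom, rfl⟩ := mem_gradedPiece.mp ha
    have hmem : Ideal.Quotient.mk I (P * q) ∈ gradedPiece I (μ + e) :=
      mem_gradedPiece.mpr ⟨_, hP.mul hqhom, rfl⟩
    rw [hvan (μ + e) (by omega)] at hmem
    exact (mk0J q).mpr ((mk0I _).mp (Submodule.mem_bot ℂ |>.mp hmem))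
end

section
/- Let I ⊆ ℂ[x_0, …, x_N] be a homogeneous ideal and let P, Q be homogeneous polynomials of the same degree μ such that each of the colon ideals (I : P), (I : Q) and (I : P + Q) is Artinian Gorenstein of the same socle σ. If (I : P) ≠ (I : Q), then (I : P) ∩ (I : Q) ≠ (I : P + Q). -/
open MvPolynomial

attribute [local instance] MvPolynomial.gradedAlgebra

lemma mem_colonIdeal {A : Type*} [CommRing A] (I : Ideal A) (P r : A) :
    r ∈ colonIdeal I P ↔ P * r ∈ I := Iff.rfl

lemma colonIdeal_isHomogeneous {N μ : ℕ} {I : Ideal (MvPolynomial (Fin N) ℂ)}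
    (hI : Ideal.IsHomogeneous (homogeneousSubmodule (Fin N) ℂ) I)
    {P : MvPolynomial (Fin N) ℂ} (hP : P.IsHomogeneous μ) :
    Ideal.IsHomogeneous (homogeneousSubmodule (Fin N) ℂ) (colonIdeal I P) := by
  intro i r hr
  rw [mem_colonIdeal] at hr ⊢
  have hPm : P ∈ homogeneousSubmodule (Fin N) ℂ μ := (mem_homogeneousSubmodule _ _).2 hP
  have := hI (μ + i) hr
  rwa [DirectSum.coe_decompose_mul_add_of_left_mem _ hPm] at this

lemma mk_mem_gradedPiece {N : ℕ} {I : Ideal (MvPolynomial (Fin N) ℂ)} {e : ℕ}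
    {f : MvPolynomial (Fin N) ℂ} (hf : f.IsHomogeneous e) :
    Ideal.Quotient.mk I f ∈ gradedPiece I e :=
  ⟨f, (mem_homogeneousSubmodule _ _).2 hf, rfl⟩

set_option maxHeartbeats 1000000 in
set_option synthInstance.maxHeartbeats 400000 in
lemma eq_of_le_AG {N : ℕ} {J J' : Ideal (MvPolynomial (Fin N) ℂ)}
    (hJ'hom : Ideal.IsHomogeneous (homogeneousSubmodule (Fin N) ℂ) J')
    (hle : J ≤ J') {σ : ℕ}
    (hJ : IsArtinianGorenstein J σ) (hJ' : IsArtinianGorenstein J' σ) : J = J' := by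
  classical
  by_contra hne
  -- there exists f ∈ J' \ J
  obtain ⟨f, hfJ', hfJ⟩ : ∃ f, f ∈ J' ∧ f ∉ J := by
    by_contra h
    push_neg at h
    exact hne (le_antisymm hle h)
  -- some homogeneous component of f is in J' but not in J
  obtain ⟨i, hgJ⟩ : ∃ i,
      ((DirectSum.decompose (homogeneousSubmodule (Fin N) ℂ) f i :
        homogeneousSubmodule (Fin N) ℂ i) : MvPolynomial (Fin N) ℂ) ∉ J := by
    by_contra h
    push_neg at h
    have := DirectSum.sum_support_decompose (homogeneousSubmodule (Fin N) ℂ) f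
    exact hfJ (this ▸ Ideal.sum_mem J fun i _ => h i)
  set g : MvPolynomial (Fin N) ℂ :=
    ((DirectSum.decompose (homogeneousSubmodule (Fin N) ℂ) f i :
      homogeneousSubmodule (Fin N) ℂ i) : MvPolynomial (Fin N) ℂ) with hg_def
  have hgJ' : g ∈ J' := hJ'hom i hfJ'
  have hghom : g.IsHomogeneous i := (mem_homogeneousSubmodule _ _).1 (SetLike.coe_mem _)
  have hgi : Ideal.Quotient.mk J g ∈ gradedPiece J i := mk_mem_gradedPiece hghom
  have hgne : Ideal.Quotient.mk J g ≠ 0 := fun h => hgJ (Ideal.Quotient.eq_zero_iff_mem.1 h)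
  have hiσ : i ≤ σ := by
    by_contra h
    push_neg at h
    have := hJ.2.2 i h
    rw [this] at hgi
    exact hgne hgi
  obtain ⟨b, hb, hab⟩ := (hJ.2.1 i hiσ).1 _ hgi hgne
  obtain ⟨h, hhmem, rfl⟩ := hb
  have hhhom : h.IsHomogeneous (σ - i) := (mem_homogeneousSubmodule _ _).1 hhmem
  -- v := mk (g * h) is a nonzero element of gradedPiece J σ
  have hghhom : (g * h).IsHomogeneous σ := by
    have := hghom.mul hhhom
    rwa [Nat.add_sub_cancel' hiσ] at this
  set v : MvPolynomial (Fin N) ℂ ⧸ J := Ideal.Quotient.mk J (g * h) with hv_def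
  have hveq : (Ideal.Quotient.mk J g) * ((Ideal.Quotient.mkₐ ℂ J).toLinearMap h) = v := by
    simp [hv_def, map_mul]
  have hvmem : v ∈ gradedPiece J σ := mk_mem_gradedPiece hghhom
  have hvne : v ≠ 0 := by rw [← hveq]; exact hab
  -- the span of v is all of gradedPiece J σ
  have hfd : FiniteDimensional ℂ (gradedPiece J σ) :=
    Module.finite_of_finrank_eq_succ hJ.1
  have hspan : Submodule.span ℂ {v} = gradedPiece J σ := by
    apply Submodule.eq_of_le_of_finrank_le ((Submodule.span_singleton_le_iff_mem _ _).2 hvmem)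
    rw [hJ.1, finrank_span_singleton hvne]
  -- gradedPiece J' σ = ⊥
  have hbot : gradedPiece J' σ = ⊥ := by
    rw [eq_bot_iff]
    rintro x ⟨p, hpmem, rfl⟩
    have hpv : Ideal.Quotient.mk J p ∈ Submodule.span ℂ {v} := by
      rw [hspan]
      exact mk_mem_gradedPiece ((mem_homogeneousSubmodule _ _).1 hpmem)
    obtain ⟨c, hc⟩ := Submodule.mem_span_singleton.1 hpv
    have hcv : Ideal.Quotient.mk J p = Ideal.Quotient.mk J (c • (g * h)) := by
      have h2 : (Ideal.Quotient.mk J) (c • (g * h)) = c • v := by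
        rw [hv_def, ← Ideal.Quotient.mkₐ_eq_mk ℂ, map_smul]
      rw [← hc, h2]
    have hsub : p - c • (g * h) ∈ J := by
      rw [← Ideal.Quotient.eq_zero_iff_mem, map_sub, hcv, sub_self]
    have hpJ' : p ∈ J' := by
      have h1 : c • (g * h) ∈ J' := by
        rw [smul_eq_C_mul]
        exact J'.mul_mem_left _ (J'.mul_mem_right h hgJ')
      have := J'.add_mem (hle hsub) h1
      simpa using this
    simp only [Submodule.mem_bot]
    exact Ideal.Quotient.eq_zero_iff_mem.2 hpJ'
  have : Module.finrank ℂ (gradedPiece J' σ) = 0 := by rw [hbot]; exact finrank_bot ℂ _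
  rw [hJ'.1] at this
  exact one_ne_zero this

theorem colon_inter_ne_colon_add (N : ℕ)
    (I : Ideal (MvPolynomial (Fin (N + 1)) ℂ))
    (hIhom : Ideal.IsHomogeneous (homogeneousSubmodule (Fin (N + 1)) ℂ) I)
    (P Q : MvPolynomial (Fin (N + 1)) ℂ) (μ : ℕ)
    (hP : P.IsHomogeneous μ) (hQ : Q.IsHomogeneous μ) (σ : ℕ)
    (hAGP : IsArtinianGorenstein (colonIdeal I P) σ)
    (hAGQ : IsArtinianGorenstein (colonIdeal I Q) σ)
    (hAGPQ : IsArtinianGorenstein (colonIdeal I (P + Q)) σ)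
    (hne : colonIdeal I P ≠ colonIdeal I Q) :
    colonIdeal I P ⊓ colonIdeal I Q ≠ colonIdeal I (P + Q) := by
  intro h
  have hleP : colonIdeal I (P + Q) ≤ colonIdeal I P := h ▸ inf_le_left
  have hleQ : colonIdeal I (P + Q) ≤ colonIdeal I Q := h ▸ inf_le_right
  have hEP : colonIdeal I (P + Q) = colonIdeal I P :=
    eq_of_le_AG (colonIdeal_isHomogeneous hIhom hP) hleP hAGPQ hAGP
  have hEQ : colonIdeal I (P + Q) = colonIdeal I Q :=
    eq_of_le_AG (colonIdeal_isHomogeneous hIhom hQ) hleQ hAGPQ hAGQ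
  exact hne (hEP ▸ hEQ)
end

section
/- Let n ≥ 0 be even, d ≥ 2, let ζ ∈ ℂ be a primitive 2d-th root of unity, and let α_0, α_2, …, α_n be odd integers in {1, 3, …, 2d−1}. For j = 1, …, n/2 + 1 define f_j := x_{2j−2} − ζ^{α_{2j−2}} x_{2j−1} and g_j := Σ_{l=0}^{d−1} x_{2j−2}^{d−1−l} ζ^{α_{2j−2} l} x_{2j−1}^{l} in ℂ[x_0, …, x_{n+1}]. Then: (a) Σ_{j=1}^{n/2+1} f_j g_j = x_0^d + x_1^d + ⋯ + x_{n+1}^d; and (b) the determinant of the (n+2)×(n+2) Jacobian matrix Jac(H) of H := (f_1, g_1, f_2, g_2, …, f_{n/2+1}, g_{n/2+1}) with respect to x_0, …, x_{n+1} equals d^{n/2+1} · ζ^{α_0 + α_2 + ⋯ + α_n} · Π_{j=1}^{n/2+1} ( Σ_{l=0}^{d−2} x_{2j−2}^{d−2−l} ζ^{α_{2j−2} l} x_{2j−1}^{l} ). -/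
/-!
Each summand telescopes: `(x - c y) · Σ_{l<d} x^{d-1-l} (c y)^l = x^d - c^d y^d`, and
`c^d = ζ^{α d} = (-1)^α = -1` because `ζ^d = -1` and `α` is odd.

The Jacobian is block diagonal, with one `2 × 2` block for each pair `(x_{2j}, x_{2j+1})`.
For `f = x_a - c x_b` and `g = Σ_{l<d} x_a^{d-1-l} (c x_b)^l` the block determinant is
`(∂_b + c ∂_a) g`. The derivation `∂_b + c ∂_a` sends both `x_a` and `c x_b` to `c`, so it maps
`x_a^{d-1-l} (c x_b)^l` to `c (d-1-l) x_a^{d-2-l} (c x_b)^l + c l x_a^{d-1-l} (c x_b)^{l-1}`,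
and the total coefficient of every monomial `x_a^{d-2-l} (c x_b)^l` is `c d`.
-/

open MvPolynomial
open Fin.NatCast

/-- The Jacobian matrix `(∂f_i/∂x_j)` of a tuple of polynomials. -/
noncomputable def jacMatrix {N : ℕ} (f : Fin N → MvPolynomial (Fin N) ℂ) :
    Matrix (Fin N) (Fin N) (MvPolynomial (Fin N) ℂ) :=
  fun i j => MvPolynomial.pderiv j (f i)

open Finset

theorem Matrix.det_eq_prod_det_blocks {ι o κ R : Type*} [Fintype ι] [DecidableEq ι]
    [Fintype o] [DecidableEq o] [Fintype κ] [DecidableEq κ] [CommRing R]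
    (e : ι × o ≃ κ) (M : Matrix κ κ R)
    (hoff : ∀ j j' i i', j ≠ j' → M (e (j, i)) (e (j', i')) = 0) :
    M.det = ∏ j, (Matrix.of fun i i' => M (e (j, i)) (e (j, i'))).det := by
  let e' := e.symm.trans (Equiv.prodComm ι o)
  have hM : M = (Matrix.blockDiagonal fun j =>
      Matrix.of fun i i' => M (e (j, i)) (e (j, i'))).submatrix e' e' := by
    ext k k'
    obtain ⟨⟨j, i⟩, rfl⟩ := e.surjective k
    obtain ⟨⟨j', i'⟩, rfl⟩ := e.surjective k'
    by_cases hj : j = j'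
    · subst hj
      simp [e']
    · simp [e', Matrix.blockDiagonal_apply, hj, hoff j j' i i' hj]
  rw [congrArg Matrix.det hM, Matrix.det_submatrix_equiv_self, Matrix.det_blockDiagonal]

theorem IsPrimitiveRoot.pow_half_eq_neg_one {R : Type*} [CommRing R] [IsDomain R] {ζ : R}
    {d : ℕ} (hζ : IsPrimitiveRoot ζ (2 * d)) (hd : d ≠ 0) : ζ ^ d = -1 := by
  have h2 := hζ.pow_of_dvd hd (dvd_mul_left d 2)
  rw [Nat.mul_div_cancel _ (Nat.pos_of_ne_zero hd)] at h2
  exact h2.eq_neg_one_of_two_right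

def finPairEquiv {m N : ℕ} (h : m * 2 = N) : Fin m × Fin 2 ≃ Fin N :=
  finProdFinEquiv.trans (finCongr h)

theorem finPairEquiv_apply_val {m N : ℕ} (h : m * 2 = N) (j : Fin m) (i : Fin 2) :
    (finPairEquiv h (j, i) : ℕ) = 2 * j + i := by
  simp only [finPairEquiv, Equiv.trans_apply, finCongr_apply, Fin.val_cast,
    finProdFinEquiv_apply_val]
  ring

namespace MvPolynomial

section GeomSum

variable {R σ : Type*} [CommRing R]

noncomputable def geomSum₂ (a b : σ) (c : R) (d : ℕ) : MvPolynomial σ R :=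
  ∑ l ∈ range d, X a ^ (d - 1 - l) * C (c ^ l) * X b ^ l

theorem geomSum₂_succ (a b : σ) (c : R) (d : ℕ) :
    geomSum₂ a b c (d + 1) = C c * X b * geomSum₂ a b c d + X a ^ d := by
  rw [geomSum₂, sum_range_succ', geomSum₂, mul_sum]
  congr 1
  · refine sum_congr rfl fun l _ => ?_
    rw [show d + 1 - 1 - (l + 1) = d - 1 - l by omega, map_pow, map_pow]
    ring
  · simp

theorem sub_mul_geomSum₂ (a b : σ) (c : R) (d : ℕ) :
    (X a - C c * X b) * geomSum₂ a b c d = X a ^ d - C (c ^ d) * X b ^ d := by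
  induction d with
  | zero => simp [geomSum₂]
  | succ d ih =>
    rw [geomSum₂_succ, mul_add, mul_left_comm, ih, map_pow, map_pow]
    ring

theorem pderiv_geomSum₂_of_ne {a b k : σ} (hka : k ≠ a) (hkb : k ≠ b) (c : R) (d : ℕ) :
    pderiv k (geomSum₂ a b c d) = 0 := by
  induction d with
  | zero => simp [geomSum₂]
  | succ d ih =>
    simp [geomSum₂_succ, ih, pderiv_X_of_ne hka.symm, pderiv_X_of_ne hkb.symm]

theorem pderiv_add_C_mul_pderiv_geomSum₂ {a b : σ} (hab : a ≠ b) (c : R) (d : ℕ) :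
    pderiv b (geomSum₂ a b c (d + 1)) + C c * pderiv a (geomSum₂ a b c (d + 1)) =
      C ((d + 1) * c) * geomSum₂ a b c d := by
  induction d with
  | zero => simp [geomSum₂]
  | succ d ih =>
    rw [geomSum₂_succ a b c (d + 1)]
    simp only [map_add, pderiv_mul, pderiv_C, pderiv_X_self, pderiv_X_of_ne hab,
      pderiv_X_of_ne hab.symm, pderiv_pow]
    simp only [map_mul, map_add, map_natCast, map_one] at ih ⊢
    push_cast
    linear_combination (C c * X b) * ih - ((d + 1) * C c) * geomSum₂_succ a b c d

theorem pderiv_minor_sub_geomSum₂ {a b : σ} (hab : a ≠ b) (c : R) (d : ℕ) :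
    pderiv a (X a - C c * X b) * pderiv b (geomSum₂ a b c (d + 1)) -
        pderiv b (X a - C c * X b) * pderiv a (geomSum₂ a b c (d + 1)) =
      C ((d + 1) * c) * geomSum₂ a b c d := by
  rw [← pderiv_add_C_mul_pderiv_geomSum₂ hab]
  simp [pderiv_X_of_ne hab, pderiv_X_of_ne hab.symm]

end GeomSum

section Pairs

variable {ι σ R : Type*} [CommRing R] [Fintype ι] [Fintype σ] (e : ι × Fin 2 ≃ σ) (c : ι → R)

theorem sum_sub_mul_geomSum₂_eq_sum_X_pow {d : ℕ} (hc : ∀ j, c j ^ d = -1) :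
    ∑ j, (X (e (j, 0)) - C (c j) * X (e (j, 1))) * geomSum₂ (e (j, 0)) (e (j, 1)) (c j) d =
      ∑ k, (X k : MvPolynomial σ R) ^ d := by
  simp only [sub_mul_geomSum₂, hc, map_neg, map_one, neg_one_mul, sub_neg_eq_add]
  rw [← e.sum_comp, Fintype.sum_prod_type]
  simp [Fin.sum_univ_two]

theorem det_pderiv_of_sub_geomSum₂_pairs [DecidableEq ι] [DecidableEq σ] (d : ℕ)
    (H : σ → MvPolynomial σ R)
    (hF : ∀ j, H (e (j, 0)) = X (e (j, 0)) - C (c j) * X (e (j, 1)))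
    (hG : ∀ j, H (e (j, 1)) = geomSum₂ (e (j, 0)) (e (j, 1)) (c j) (d + 1)) :
    (Matrix.of fun k k' => pderiv k' (H k)).det =
      C ((d + 1) ^ Fintype.card ι * ∏ j, c j) *
        ∏ j, geomSum₂ (e (j, 0)) (e (j, 1)) (c j) d := by
  have hab : ∀ j, e (j, 0) ≠ e (j, 1) := fun j => e.injective.ne (by simp)
  rw [Matrix.det_eq_prod_det_blocks e]
  · simp_rw [Matrix.det_fin_two, Matrix.of_apply, hF, hG]
    rw [prod_congr rfl fun j _ => pderiv_minor_sub_geomSum₂ (hab j) (c j) d,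
      prod_mul_distrib, ← map_prod, prod_mul_distrib, prod_const, card_univ]
  · intro j j' i i' hj
    have hne : ∀ i, e (j', i') ≠ e (j, i) := fun i h =>
      hj (congrArg Prod.fst (e.injective h)).symm
    fin_cases i
    · simp [hF, pderiv_X_of_ne (hne 0).symm, pderiv_X_of_ne (hne 1).symm]
    · simp [hG, pderiv_geomSum₂_of_ne (hne 0) (hne 1)]

end Pairs

end MvPolynomial

theorem fermat_decomposition_and_jacobian_general (n d : ℕ) (hn : Even n)
    (ζ : ℂ) (hζ : IsPrimitiveRoot ζ (2 * d))
    (α : ℕ → ℕ)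
    (hα : ∀ j ≤ n / 2, Odd (α (2 * j)) ∧ 1 ≤ α (2 * j) ∧ α (2 * j) ≤ 2 * d - 1)
    (f g : ℕ → MvPolynomial (Fin (n + 2)) ℂ)
    (hf : ∀ j, f j = X ((2 * j : ℕ) : Fin (n + 2)) -
      C (ζ ^ α (2 * j)) * X ((2 * j + 1 : ℕ) : Fin (n + 2)))
    (hg : ∀ j, g j = ∑ l ∈ Finset.range d,
      (X ((2 * j : ℕ) : Fin (n + 2))) ^ (d - 1 - l) * C (ζ ^ (α (2 * j) * l)) *
        (X ((2 * j + 1 : ℕ) : Fin (n + 2))) ^ l)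
    (H : Fin (n + 2) → MvPolynomial (Fin (n + 2)) ℂ)
    (hH : ∀ k : Fin (n + 2),
      H k = if (k : ℕ) % 2 = 0 then f ((k : ℕ) / 2) else g ((k : ℕ) / 2)) :
    (∑ j ∈ Finset.range (n / 2 + 1), f j * g j =
        ∑ k : Fin (n + 2), (X k : MvPolynomial (Fin (n + 2)) ℂ) ^ d) ∧
      (jacMatrix H).det =
        C ((d : ℂ) ^ (n / 2 + 1) * ζ ^ (∑ j ∈ Finset.range (n / 2 + 1), α (2 * j))) *
          ∏ j ∈ Finset.range (n / 2 + 1), ∑ l ∈ Finset.range (d - 1),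
            (X ((2 * j : ℕ) : Fin (n + 2))) ^ (d - 2 - l) * C (ζ ^ (α (2 * j) * l)) *
              (X ((2 * j + 1 : ℕ) : Fin (n + 2))) ^ l := by
  obtain ⟨d, rfl⟩ : ∃ d', d = d' + 1 := ⟨d - 1, by have := (hα 0 (Nat.zero_le _)).2; omega⟩
  set e := finPairEquiv (show (n / 2 + 1) * 2 = n + 2 by obtain ⟨k, rfl⟩ := hn; omega)
  have hX0 (j : Fin (n / 2 + 1)) : ((2 * j : ℕ) : Fin (n + 2)) = e (j, 0) :=
    Fin.ext (by rw [finPairEquiv_apply_val, Fin.val_cast_of_lt (by omega)]; rfl)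
  have hX1 (j : Fin (n / 2 + 1)) : ((2 * j + 1 : ℕ) : Fin (n + 2)) = e (j, 1) :=
    Fin.ext (by rw [finPairEquiv_apply_val, Fin.val_cast_of_lt (by omega)]; rfl)
  have hgeom (j : Fin (n / 2 + 1)) (k : ℕ) : ∑ l ∈ range k,
      (X ((2 * j : ℕ) : Fin (n + 2))) ^ (k - 1 - l) * C (ζ ^ (α (2 * j) * l)) *
        (X ((2 * j + 1 : ℕ) : Fin (n + 2))) ^ l =
      geomSum₂ (e (j, 0)) (e (j, 1)) (ζ ^ α (2 * j)) k := by
    simp only [geomSum₂, hX0, hX1, pow_mul]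
  have hfj (j : Fin (n / 2 + 1)) : f j = X (e (j, 0)) - C (ζ ^ α (2 * j)) * X (e (j, 1)) := by
    rw [hf, hX0, hX1]
  have hgj (j : Fin (n / 2 + 1)) :
      g j = geomSum₂ (e (j, 0)) (e (j, 1)) (ζ ^ α (2 * j)) (d + 1) := by
    rw [hg, hgeom]
  have hHf (j : Fin (n / 2 + 1)) : H (e (j, 0)) = f j := by
    simp [hH, finPairEquiv_apply_val, e]
  have hHg (j : Fin (n / 2 + 1)) : H (e (j, 1)) = g j := by
    rw [hH, finPairEquiv_apply_val, if_neg (by omega)]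
    congr 1
    omega
  constructor
  · rw [← Fin.sum_univ_eq_sum_range (fun j => f j * g j)]
    simp only [hfj, hgj]
    refine sum_sub_mul_geomSum₂_eq_sum_X_pow e _ fun j => ?_
    rw [← pow_mul, mul_comm, pow_mul, hζ.pow_half_eq_neg_one d.succ_ne_zero,
      (hα j (by omega)).1.neg_one_pow]
  · simp only [show ∀ l, d + 1 - 2 - l = d - 1 - l by omega, add_tsub_cancel_right]
    rw [← Fin.prod_univ_eq_prod_range, ← Fin.sum_univ_eq_sum_range, ← prod_pow_eq_pow_sum]
    simp only [hgeom]
    refine (det_pderiv_of_sub_geomSum₂_pairs e _ d H (fun j => (hHf j).trans (hfj j))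
      fun j => (hHg j).trans (hgj j)).trans ?_
    simp

theorem fermat_decomposition_and_jacobian (n d : ℕ) (hn : Even n) (hd : 2 ≤ d)
    (ζ : ℂ) (hζ : IsPrimitiveRoot ζ (2 * d))
    (α : ℕ → ℕ)
    (hα : ∀ j ≤ n / 2, Odd (α (2 * j)) ∧ 1 ≤ α (2 * j) ∧ α (2 * j) ≤ 2 * d - 1)
    (f g : ℕ → MvPolynomial (Fin (n + 2)) ℂ)
    (hf : ∀ j, f j = X ((2 * j : ℕ) : Fin (n + 2)) -
      C (ζ ^ α (2 * j)) * X ((2 * j + 1 : ℕ) : Fin (n + 2)))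
    (hg : ∀ j, g j = ∑ l ∈ Finset.range d,
      (X ((2 * j : ℕ) : Fin (n + 2))) ^ (d - 1 - l) * C (ζ ^ (α (2 * j) * l)) *
        (X ((2 * j + 1 : ℕ) : Fin (n + 2))) ^ l)
    (H : Fin (n + 2) → MvPolynomial (Fin (n + 2)) ℂ)
    (hH : ∀ k : Fin (n + 2),
      H k = if (k : ℕ) % 2 = 0 then f ((k : ℕ) / 2) else g ((k : ℕ) / 2)) :
    (∑ j ∈ Finset.range (n / 2 + 1), f j * g j =
        ∑ k : Fin (n + 2), (X k : MvPolynomial (Fin (n + 2)) ℂ) ^ d) ∧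
      (jacMatrix H).det =
        C ((d : ℂ) ^ (n / 2 + 1) * ζ ^ (∑ j ∈ Finset.range (n / 2 + 1), α (2 * j))) *
          ∏ j ∈ Finset.range (n / 2 + 1), ∑ l ∈ Finset.range (d - 1),
            (X ((2 * j : ℕ) : Fin (n + 2))) ^ (d - 2 - l) * C (ζ ^ (α (2 * j) * l)) *
              (X ((2 * j + 1 : ℕ) : Fin (n + 2))) ^ l :=
  fermat_decomposition_and_jacobian_general n d hn ζ hζ α hα f g hf hg H hH
end

section
/- Let n ≥ 0 be even, d ≥ 2, let ζ ∈ ℂ be a primitive 2d-th root of unity, and let α_0, α_2, …, α_n and β_0, β_2, …, β_n be odd integers in {1, 3, …, 2d−1}. Define P_α := d^{n/2+1} ζ^{α_0 + α_2 + ⋯ + α_n} Π_{j=1}^{n/2+1} ( Σ_{l=0}^{d−2} x_{2j−2}^{d−2−l} ζ^{α_{2j−2} l} x_{2j−1}^{l} ) and P_β analogously with the β's. Let m + 1 := #{ j ∈ {1, …, n/2+1} : α_{2j−2} = β_{2j−2} }. Then P_α · P_β ≡ (1−d)^{m+1} · d^{n+2} · (x_0 x_1 ⋯ x_{n+1})^{d−2}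 modulo the ideal ⟨x_0^{d−1}, …, x_{n+1}^{d−1}⟩ of ℂ[x_0, …, x_{n+1}]. -/
/-!
Modulo the ideal, `x_k ^ (d - 1) = 0`. In the product of the `j`-th binary forms of `P_α` and
`P_β`, a term `x_{2j} ^ (2d - 4 - l - l') x_{2j+1} ^ (l + l')` therefore survives only when
`l + l' = d - 2`, which leaves `(∑_l ζ ^ (α l + β (d - 2 - l))) (x_{2j} x_{2j+1}) ^ (d - 2)`.
Put `a = ζ ^ α` and `b = ζ ^ β`; as `α, β` are odd, `a ^ d = b ^ d = -1`. The prefactor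
`ζ ^ (∑ α + ∑ β)` multiplies this scalar by `a b`, giving
`∑_{k=1}^{d-1} a ^ k b ^ (d - k) = b G + 1` with `G = ∑_{k<d} a ^ k b ^ (d - 1 - k)`.
If `a ≠ b` then `G (a - b) = a ^ d - b ^ d = 0`, so the result is `1`; if `a = b`
(equivalently `α = β`) then `b G = d a ^ d = -d`, so it is `1 - d`.
-/

open MvPolynomial Finset
open Fin.NatCast

lemma prod_range_two_mul {M : Type*} [CommMonoid M] (f : ℕ → M) (t : ℕ) :
    ∏ k ∈ range (2 * t), f k = ∏ j ∈ range t, f (2 * j) * f (2 * j + 1) := by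
  induction t with
  | zero => simp
  | succ t ih =>
    rw [Nat.mul_succ, prod_range_succ, prod_range_succ, prod_range_succ, ih, mul_assoc]

lemma Fin.prod_univ_eq_prod_range_two_mul {M : Type*} [CommMonoid M] {N t : ℕ} [NeZero N]
    (hN : N = 2 * t) (f : Fin N → M) :
    ∏ k, f k = ∏ j ∈ range t, f (2 * j : ℕ) * f (2 * j + 1 : ℕ) := by
  subst hN
  calc ∏ k, f k = ∏ k : Fin (2 * t), f ((k : ℕ) : Fin (2 * t)) := by
        simp only [Fin.cast_val_eq_self]
    _ = _ := by rw [Fin.prod_univ_eq_prod_range (fun k => f k), prod_range_two_mul]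

lemma sum_mul_sum_eq_of_pow_succ_eq_zero {S : Type*} [CommRing S] {x y : S} {e : ℕ}
    (hx : x ^ (e + 1) = 0) (hy : y ^ (e + 1) = 0) (c c' : ℕ → S) :
    (∑ l ∈ range (e + 1), x ^ (e - l) * c l * y ^ l) *
        (∑ l ∈ range (e + 1), x ^ (e - l) * c' l * y ^ l) =
      (∑ l ∈ range (e + 1), c l * c' (e - l)) * (x ^ e * y ^ e) := by
  have hterm : ∀ l l', x ^ (e - l) * c l * y ^ l * (x ^ (e - l') * c' l' * y ^ l') =
      c l * c' l' * (x ^ (e - l + (e - l')) * y ^ (l + l')) := fun l l' => by ring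
  rw [sum_mul_sum, sum_mul]
  refine sum_congr rfl fun l hl => ?_
  have hl : l ≤ e := mem_range_succ_iff.mp hl
  rw [sum_eq_single_of_mem (e - l) (mem_range.mpr (by omega)), hterm,
    show e - l + (e - (e - l)) = e by omega, show l + (e - l) = e by omega]
  intro l' hl' hne
  have hl' : l' ≤ e := mem_range_succ_iff.mp hl'
  rw [hterm]
  rcases lt_or_gt_of_ne (show l + l' ≠ e by omega) with hlt | hgt
  · rw [pow_eq_zero_of_le (by omega) hx, zero_mul, mul_zero]
  · rw [pow_eq_zero_of_le (by omega) hy, mul_zero, mul_zero]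

lemma prod_sum_mul_prod_sum_sub_mem {ι S : Type*} [CommRing S] {I : Ideal S}
    {s : Finset ι} {x y : ι → S} {e : ℕ} (hx : ∀ i ∈ s, x i ^ (e + 1) ∈ I)
    (hy : ∀ i ∈ s, y i ^ (e + 1) ∈ I) (c c' : ι → ℕ → S) :
    (∏ i ∈ s, ∑ l ∈ range (e + 1), x i ^ (e - l) * c i l * y i ^ l) *
        (∏ i ∈ s, ∑ l ∈ range (e + 1), x i ^ (e - l) * c' i l * y i ^ l) -
      (∏ i ∈ s, ∑ l ∈ range (e + 1), c i l * c' i (e - l)) * ∏ i ∈ s, x i ^ e * y i ^ e ∈ I := by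
  rw [← Ideal.Quotient.eq_zero_iff_mem, map_sub, sub_eq_zero]
  simp only [map_mul, map_prod, map_sum, map_pow]
  rw [← prod_mul_distrib, ← prod_mul_distrib]
  refine prod_congr rfl fun i hi => sum_mul_sum_eq_of_pow_succ_eq_zero ?_ ?_ _ _
  · rw [← map_pow, Ideal.Quotient.eq_zero_iff_mem]; exact hx i hi
  · rw [← map_pow, Ideal.Quotient.eq_zero_iff_mem]; exact hy i hi

lemma mul_mul_sum_pow_mul_pow_of_pow_eq_neg_one {R : Type*} [CommRing R] [IsDomain R]
    [DecidableEq R] {a b : R} {e : ℕ} (ha : a ^ (e + 2) = -1) (hb : b ^ (e + 2) = -1) :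
    a * b * ∑ l ∈ range (e + 1), a ^ l * b ^ (e - l) =
      if a = b then 1 - ((e + 2 : ℕ) : R) else 1 := by
  have hshift : ∑ i ∈ range (e + 2), a ^ i * b ^ (e + 1 - i) =
      a * ∑ l ∈ range (e + 1), a ^ l * b ^ (e - l) + b ^ (e + 1) := by
    simp only [sum_range_succ' _ (e + 1), mul_sum, Nat.add_sub_add_right, pow_succ', pow_zero,
      one_mul, Nat.sub_zero, mul_assoc]
  rw [show a * b * ∑ l ∈ range (e + 1), a ^ l * b ^ (e - l) =
      b * ∑ i ∈ range (e + 2), a ^ i * b ^ (e + 1 - i) + 1 by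
    linear_combination -b * hshift - hb]
  split_ifs with hab
  · subst hab
    have hgeom := geom_sum₂_self a (e + 2)
    rw [show e + 2 - 1 = e + 1 by omega] at hgeom
    rw [hgeom]
    linear_combination ((e + 2 : ℕ) : R) * ha
  · have hG : (∑ i ∈ range (e + 2), a ^ i * b ^ (e + 1 - i)) * (a - b) = 0 := by
      rw [show e + 1 = e + 2 - 1 by omega, geom_sum₂_mul, ha, hb, sub_self]
    rw [(mul_eq_zero.mp hG).resolve_right (sub_ne_zero.mpr hab)]
    ring

lemma IsPrimitiveRoot.pow_pow_eq_neg_one_of_odd {R : Type*} [CommRing R] [IsDomain R] {ζ : R}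
    {d : ℕ} (hζ : IsPrimitiveRoot ζ (2 * d)) (hd : d ≠ 0) {u : ℕ} (hu : Odd u) :
    (ζ ^ u) ^ d = -1 := by
  have h2 : IsPrimitiveRoot (ζ ^ d) 2 := by
    simpa [hd] using hζ.pow_of_dvd hd (dvd_mul_left d 2)
  rw [← pow_mul, mul_comm, pow_mul, h2.eq_neg_one_of_two_right, hu.neg_one_pow]

lemma IsPrimitiveRoot.pow_add_mul_sum_pow_mul_pow {R : Type*} [CommRing R] [IsDomain R] {ζ : R}
    {e : ℕ} (hζ : IsPrimitiveRoot ζ (2 * (e + 2))) {u v : ℕ} (hu : Odd u) (hv : Odd v)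
    (hu' : u < 2 * (e + 2)) (hv' : v < 2 * (e + 2)) :
    ζ ^ (u + v) * ∑ l ∈ range (e + 1), ζ ^ (u * l) * ζ ^ (v * (e - l)) =
      if u = v then 1 - ((e + 2 : ℕ) : R) else 1 := by
  classical
  have hiff : ζ ^ u = ζ ^ v ↔ u = v := ⟨fun h => hζ.pow_inj hu' hv' h, fun h => h ▸ rfl⟩
  simp only [pow_add, pow_mul]
  rw [mul_mul_sum_pow_mul_pow_of_pow_eq_neg_one (hζ.pow_pow_eq_neg_one_of_odd (by omega) hu)
    (hζ.pow_pow_eq_neg_one_of_odd (by omega) hv), if_congr hiff rfl rfl]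

lemma IsPrimitiveRoot.pow_sum_mul_pow_sum_mul_prod_sum {ι R : Type*} [CommRing R] [IsDomain R]
    {ζ : R} {e : ℕ} (hζ : IsPrimitiveRoot ζ (2 * (e + 2))) {s : Finset ι} {u v : ι → ℕ}
    (hu : ∀ i ∈ s, Odd (u i) ∧ u i < 2 * (e + 2)) (hv : ∀ i ∈ s, Odd (v i) ∧ v i < 2 * (e + 2)) :
    ζ ^ (∑ i ∈ s, u i) * ζ ^ (∑ i ∈ s, v i) *
        ∏ i ∈ s, ∑ l ∈ range (e + 1), ζ ^ (u i * l) * ζ ^ (v i * (e - l)) =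
      (1 - ((e + 2 : ℕ) : R)) ^ #{i ∈ s | u i = v i} := by
  rw [← pow_add, ← sum_add_distrib, ← prod_pow_eq_pow_sum, ← prod_mul_distrib,
    prod_congr rfl fun i hi => hζ.pow_add_mul_sum_pow_mul_pow (hu i hi).1 (hv i hi).1
      (hu i hi).2 (hv i hi).2, prod_ite, prod_const, prod_const_one, mul_one]

theorem linear_cycle_polys_product_mod_jacobian (n d : ℕ) (hn : Even n) (hd : 2 ≤ d)
    (ζ : ℂ) (hζ : IsPrimitiveRoot ζ (2 * d))
    (α β : ℕ → ℕ)
    (hα : ∀ j ≤ n / 2, Odd (α (2 * j)) ∧ 1 ≤ α (2 * j) ∧ α (2 * j) ≤ 2 * d - 1)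
    (hβ : ∀ j ≤ n / 2, Odd (β (2 * j)) ∧ 1 ≤ β (2 * j) ∧ β (2 * j) ≤ 2 * d - 1)
    (Pα Pβ : MvPolynomial (Fin (n + 2)) ℂ)
    (hPα : Pα = C ((d : ℂ) ^ (n / 2 + 1) * ζ ^ (∑ j ∈ Finset.range (n / 2 + 1), α (2 * j))) *
      ∏ j ∈ Finset.range (n / 2 + 1), ∑ l ∈ Finset.range (d - 1),
        (X ((2 * j : ℕ) : Fin (n + 2))) ^ (d - 2 - l) * C (ζ ^ (α (2 * j) * l)) *
          (X ((2 * j + 1 : ℕ) : Fin (n + 2))) ^ l)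
    (hPβ : Pβ = C ((d : ℂ) ^ (n / 2 + 1) * ζ ^ (∑ j ∈ Finset.range (n / 2 + 1), β (2 * j))) *
      ∏ j ∈ Finset.range (n / 2 + 1), ∑ l ∈ Finset.range (d - 1),
        (X ((2 * j : ℕ) : Fin (n + 2))) ^ (d - 2 - l) * C (ζ ^ (β (2 * j) * l)) *
          (X ((2 * j + 1 : ℕ) : Fin (n + 2))) ^ l)
    (m : ℕ)
    (hm : m + 1 =
      ((Finset.range (n / 2 + 1)).filter fun j => α (2 * j) = β (2 * j)).card) :
    Pα * Pβ -
        C ((1 - (d : ℂ)) ^ (m + 1) * (d : ℂ) ^ (n + 2)) *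
          (∏ k : Fin (n + 2), (X k : MvPolynomial (Fin (n + 2)) ℂ)) ^ (d - 2) ∈
      Ideal.span
        (Set.range fun k : Fin (n + 2) => (X k : MvPolynomial (Fin (n + 2)) ℂ) ^ (d - 1)) := by
  obtain ⟨e, rfl⟩ : ∃ e, d = e + 2 := ⟨d - 2, by omega⟩
  have hn2 : n + 2 = 2 * (n / 2 + 1) := by obtain ⟨r, rfl⟩ := hn; omega
  have hαs : ∀ j ∈ range (n / 2 + 1), Odd (α (2 * j)) ∧ α (2 * j) < 2 * (e + 2) := fun j hj => by
    obtain ⟨hodd, -, hle⟩ := hα j (mem_range_succ_iff.mp hj); exact ⟨hodd, by omega⟩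
  have hβs : ∀ j ∈ range (n / 2 + 1), Odd (β (2 * j)) ∧ β (2 * j) < 2 * (e + 2) := fun j hj => by
    obtain ⟨hodd, -, hle⟩ := hβ j (mem_range_succ_iff.mp hj); exact ⟨hodd, by omega⟩
  have hmem := prod_sum_mul_prod_sum_sub_mem
    (I := Ideal.span
      (Set.range fun k : Fin (n + 2) => (X k : MvPolynomial (Fin (n + 2)) ℂ) ^ (e + 1)))
    (s := range (n / 2 + 1)) (x := fun j => X ((2 * j : ℕ) : Fin (n + 2)))
    (y := fun j => X ((2 * j + 1 : ℕ) : Fin (n + 2)))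
    (fun j _ => Ideal.subset_span ⟨_, rfl⟩) (fun j _ => Ideal.subset_span ⟨_, rfl⟩)
    (fun j l => C (ζ ^ (α (2 * j) * l))) (fun j l => C (ζ ^ (β (2 * j) * l)))
  subst hPα hPβ
  simp only [Nat.add_sub_cancel, Nat.add_succ_sub_one]
  rw [← prod_pow, Fin.prod_univ_eq_prod_range_two_mul hn2, hm,
    ← hζ.pow_sum_mul_pow_sum_mul_prod_sum hαs hβs,
    show ((e + 2 : ℕ) : ℂ) ^ (n + 2) = _ ^ (n / 2 + 1) * _ ^ (n / 2 + 1) by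
      rw [← pow_add, ← two_mul, ← hn2]]
  convert Ideal.mul_mem_left _
    (C (((e + 2 : ℕ) : ℂ) ^ (n / 2 + 1) * ζ ^ ∑ j ∈ range (n / 2 + 1), α (2 * j)) *
      C (((e + 2 : ℕ) : ℂ) ^ (n / 2 + 1) * ζ ^ ∑ j ∈ range (n / 2 + 1), β (2 * j))) hmem using 1
  simp only [map_mul, map_prod, map_sum, mul_sub]
  ring
end
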